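/- Let A be the adjacency matrix (as a {0,1,2,...}-valued m×p matrix with column sums δ) of a δ-left-regular bipartite multigraph G, and order the edges of the tensor graph G^⊗ so that E^⊗ = E₁^⊗ ∪ E₂^⊗, where E₂^⊗ consists of edges colliding (sharing a right endpoint) with an earlier edge. Then for every p×p matrix X: ‖A X Aᵀ‖₁ ≥ δ²‖X‖₁ − 2·Σ_{(ii',jj') ∈ E₂^⊗} |X_{ii'}|. -/
import Mathlib


open Matrix Finset

/-- Entrywise ℓ1 norm of a matrix. -/
noncomputable def matL1 {p q : ℕ} (M : Matrix (Fin p) (Fin q) ℝ) : ℝ :=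
  ∑ i, ∑ j, |M i j|

lemma abs_sum_of_sum_le_one {ι : Type*} [Fintype ι] (e : ι → ℕ) (x : ι → ℝ)
    (h : ∑ i, e i ≤ 1) : |∑ i, (e i : ℝ) * x i| = ∑ i, (e i : ℝ) * |x i| := by
  by_cases hz : ∀ i, e i = 0
  · simp [hz]
  · push_neg at hz
    obtain ⟨k, hk⟩ := hz
    have hothers : ∀ i ∈ Finset.univ, i ≠ k → (e i : ℝ) * x i = 0 := by
      intro i _ hik
      have h2 : e i + e k ≤ ∑ j, e j :=
        Finset.add_le_sum (f := e) (fun j _ => Nat.zero_le _)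
          (Finset.mem_univ i) (Finset.mem_univ k) hik
      have : e i = 0 := by omega
      simp [this]
    have hothers' : ∀ i ∈ Finset.univ, i ≠ k → (e i : ℝ) * |x i| = 0 := by
      intro i hi hik
      have := hothers i hi hik
      rcases mul_eq_zero.1 this with h' | h'
      · simp [h']
      · simp [h']
    rw [Finset.sum_eq_single k hothers (by simp),
      Finset.sum_eq_single k hothers' (by simp), abs_mul, Nat.abs_cast]

/-- **Lemma 3.** Let `A` (column sums `δ`) be the adjacency matrix of
a `δ`-left-regular bipartite multigraph, so the tensor graph joins left node `ii'` to
right node `jj'` with multiplicity `A_{j i} A_{j' i'}`. Split the edges as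
`E^⊗ = E₁^⊗ ∪ E₂^⊗`, where `r ii' jj'` counts the `E₂^⊗` ("colliding") edges between
`ii'` and `jj'` and each right node meets at most one `E₁^⊗` edge. Then
`‖A X Aᵀ‖₁ ≥ δ²‖X‖₁ − 2 Σ_{(ii',jj') ∈ E₂^⊗} |X_{ii'}|`. -/
theorem l1_rip_collision_bound {m p : ℕ}
    (A : Matrix (Fin m) (Fin p) ℕ) (δ : ℕ)
    (hA : ∀ j : Fin p, ∑ i : Fin m, A i j = δ)
    (r : (Fin p × Fin p) → (Fin m × Fin m) → ℕ)
    (hsub : ∀ ii' jj', r ii' jj' ≤ A jj'.1 ii'.1 * A jj'.2 ii'.2)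
    (hE1 : ∀ jj' : Fin m × Fin m,
      ∑ ii' : Fin p × Fin p, (A jj'.1 ii'.1 * A jj'.2 ii'.2 - r ii' jj') ≤ 1)
    (X : Matrix (Fin p) (Fin p) ℝ) :
    matL1 ((A.map (Nat.cast : ℕ → ℝ)) * X * (A.map (Nat.cast : ℕ → ℝ))ᵀ)
      ≥ (δ : ℝ) ^ 2 * matL1 X -
        2 * ∑ jj' : Fin m × Fin m, ∑ ii' : Fin p × Fin p,
            (r ii' jj' : ℝ) * |X ii'.1 ii'.2| := by
  classical
  set c : (Fin p × Fin p) → (Fin m × Fin m) → ℕ :=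
    fun ii' jj' => A jj'.1 ii'.1 * A jj'.2 ii'.2 with hc
  -- entry formula
  have hentry : ∀ jj' : Fin m × Fin m,
      ((A.map (Nat.cast : ℕ → ℝ)) * X * (A.map (Nat.cast : ℕ → ℝ))ᵀ) jj'.1 jj'.2
        = ∑ ii' : Fin p × Fin p, (c ii' jj' : ℝ) * X ii'.1 ii'.2 := by
    intro jj'
    simp only [Matrix.mul_apply, Matrix.transpose_apply, Matrix.map_apply,
      Finset.sum_mul, hc]
    rw [Finset.sum_comm, Fintype.sum_prod_type]
    apply Finset.sum_congr rfl; intro i _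
    apply Finset.sum_congr rfl; intro i' _
    push_cast; ring
  -- L1 norm as sum over pairs
  have hL1 : matL1 ((A.map (Nat.cast : ℕ → ℝ)) * X * (A.map (Nat.cast : ℕ → ℝ))ᵀ)
      = ∑ jj' : Fin m × Fin m, |∑ ii' : Fin p × Fin p, (c ii' jj' : ℝ) * X ii'.1 ii'.2| := by
    rw [matL1, Fintype.sum_prod_type]
    exact Finset.sum_congr rfl fun j _ => Finset.sum_congr rfl fun j' _ => by
      rw [hentry (j, j')]
  -- per right node bound
  have key : ∀ jj' : Fin m × Fin m,
      |∑ ii' : Fin p × Fin p, (c ii' jj' : ℝ) * X ii'.1 ii'.2|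
        ≥ ∑ ii' : Fin p × Fin p, (c ii' jj' : ℝ) * |X ii'.1 ii'.2|
          - 2 * ∑ ii' : Fin p × Fin p, (r ii' jj' : ℝ) * |X ii'.1 ii'.2| := by
    intro jj'
    set e : (Fin p × Fin p) → ℕ := fun ii' => c ii' jj' - r ii' jj' with he
    have hce : ∀ ii', (c ii' jj' : ℝ) = (e ii' : ℝ) + (r ii' jj' : ℝ) := by
      intro ii'
      have h := hsub ii' jj'
      simp only [he]
      rw [Nat.cast_sub h]
      ring
    have hsplit : ∑ ii' : Fin p × Fin p, (c ii' jj' : ℝ) * X ii'.1 ii'.2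
        = (∑ ii' : Fin p × Fin p, (e ii' : ℝ) * X ii'.1 ii'.2)
          + ∑ ii' : Fin p × Fin p, (r ii' jj' : ℝ) * X ii'.1 ii'.2 := by
      rw [← Finset.sum_add_distrib]
      exact Finset.sum_congr rfl fun ii' _ => by rw [hce]; ring
    have habs : |∑ ii' : Fin p × Fin p, (e ii' : ℝ) * X ii'.1 ii'.2|
        = ∑ ii' : Fin p × Fin p, (e ii' : ℝ) * |X ii'.1 ii'.2| :=
      abs_sum_of_sum_le_one e _ (hE1 jj')
    have htri : |∑ ii' : Fin p × Fin p, (r ii' jj' : ℝ) * X ii'.1 ii'.2|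
        ≤ ∑ ii' : Fin p × Fin p, (r ii' jj' : ℝ) * |X ii'.1 ii'.2| := by
      refine (Finset.abs_sum_le_sum_abs _ _).trans_eq ?_
      exact Finset.sum_congr rfl fun ii' _ => by rw [abs_mul, Nat.abs_cast]
    have hse : ∑ ii' : Fin p × Fin p, (e ii' : ℝ) * |X ii'.1 ii'.2|
        = ∑ ii' : Fin p × Fin p, (c ii' jj' : ℝ) * |X ii'.1 ii'.2|
          - ∑ ii' : Fin p × Fin p, (r ii' jj' : ℝ) * |X ii'.1 ii'.2| := by
      rw [← Finset.sum_sub_distrib]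
      exact Finset.sum_congr rfl fun ii' _ => by rw [hce]; ring
    calc |∑ ii' : Fin p × Fin p, (c ii' jj' : ℝ) * X ii'.1 ii'.2|
        ≥ |∑ ii' : Fin p × Fin p, (e ii' : ℝ) * X ii'.1 ii'.2|
          - |∑ ii' : Fin p × Fin p, (r ii' jj' : ℝ) * X ii'.1 ii'.2| := by
          rw [hsplit]
          have h1 := abs_add_le
            ((∑ ii' : Fin p × Fin p, (e ii' : ℝ) * X ii'.1 ii'.2)
              + ∑ ii' : Fin p × Fin p, (r ii' jj' : ℝ) * X ii'.1 ii'.2)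
            (-(∑ ii' : Fin p × Fin p, (r ii' jj' : ℝ) * X ii'.1 ii'.2))
          rw [add_neg_cancel_right, abs_neg] at h1
          linarith
      _ ≥ ∑ ii' : Fin p × Fin p, (c ii' jj' : ℝ) * |X ii'.1 ii'.2|
          - 2 * ∑ ii' : Fin p × Fin p, (r ii' jj' : ℝ) * |X ii'.1 ii'.2| := by
          rw [habs, hse]; linarith [htri]
  -- total c sum
  have hcsum : ∀ ii' : Fin p × Fin p,
      ∑ jj' : Fin m × Fin m, (c ii' jj' : ℝ) = (δ : ℝ) ^ 2 := by
    intro ii'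
    rw [Fintype.sum_prod_type]
    simp only [hc]
    push_cast
    rw [← Finset.sum_mul_sum]
    have h1 : (∑ j : Fin m, (A j ii'.1 : ℝ)) = (δ : ℝ) := by
      rw [← Nat.cast_sum, hA]
    have h2 : (∑ j : Fin m, (A j ii'.2 : ℝ)) = (δ : ℝ) := by
      rw [← Nat.cast_sum, hA]
    rw [h1, h2]; ring
  have hmain : ∑ jj' : Fin m × Fin m, ∑ ii' : Fin p × Fin p,
      (c ii' jj' : ℝ) * |X ii'.1 ii'.2| = (δ : ℝ) ^ 2 * matL1 X := by
    rw [Finset.sum_comm]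
    have hX : (δ : ℝ) ^ 2 * matL1 X
        = ∑ ii' : Fin p × Fin p, (δ : ℝ) ^ 2 * |X ii'.1 ii'.2| := by
      simp [matL1, Fintype.sum_prod_type, Finset.mul_sum]
    rw [hX]
    exact Finset.sum_congr rfl fun ii' _ => by
      rw [← Finset.sum_mul, hcsum ii']
  rw [hL1, ← hmain, Finset.mul_sum, ← Finset.sum_sub_distrib]
  exact Finset.sum_le_sum fun jj' _ => key jj'
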